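/- arXiv:2112.03561 — 7 statements merged into one kernel-verified Lean document; each statement's English description precedes it below -/
import Mathlib

section
/- Every subgroup H of the alternating group A₆ with |H| ≥ 30 has order 36, 60, or 360; equivalently, H is all of A₆, or isomorphic to A₅, or to the semidirect product (C₃ × C₃) ⋊ C₄ of order 36. -/
/-!
Since A₆ is simple of order 360, a proper subgroup of index at most 5 would embed A₆ into S₅;
so a subgroup of order at least 30 has order 30, 36, 40, 45, 60 or 360. A permutation of six
points has no order 10 or 15: its cycle lengths would need multiples of 5 and of 2 (or 3) summing
to at most 6. A group of order 15, 40 or 45 has a normal Sylow 5-subgroup `P` by Sylow counting,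
and the centralizer of `P` has index dividing `|Aut P| = 4`, so it contains an element of order 2
or 3 commuting with `P`, i.e. an element of order 10 or 15. Finally, by Burnside's normal
complement theorem a group of order 30 has a subgroup of order 15.
-/

open Equiv Subgroup

namespace Equiv.Perm

variable {α : Type*} [Fintype α] [DecidableEq α]

theorem exists_mem_cycleType_dvd_of_prime_dvd_orderOf {σ : Perm α} {p : ℕ} (hp : p.Prime)
    (h : p ∣ orderOf σ) : ∃ a ∈ σ.cycleType, p ∣ a := by
  rw [← lcm_cycleType] at h
  exact hp.prime.exists_mem_multiset_dvd
    (h.trans (Multiset.lcm_dvd.mpr fun _ ha => Multiset.dvd_prod ha))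

theorem add_le_card_of_prime_dvd_orderOf {σ : Perm α} {p q : ℕ} (hp : p.Prime) (hq : q.Prime)
    (hpq : p ≠ q) (hpσ : p ∣ orderOf σ) (hqσ : q ∣ orderOf σ) : p + q ≤ Fintype.card α := by
  obtain ⟨a, ha, hpa⟩ := exists_mem_cycleType_dvd_of_prime_dvd_orderOf hp hpσ
  obtain ⟨b, hb, hqb⟩ := exists_mem_cycleType_dvd_of_prime_dvd_orderOf hq hqσ
  have hsum : σ.cycleType.sum ≤ Fintype.card α := by
    rw [sum_cycleType]
    exact Finset.card_le_univ _
  have hp2 := hp.two_le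
  have hq2 := hq.two_le
  have ha0 : 0 < a := (two_le_of_mem_cycleType ha).trans_lt' two_pos
  have hb0 : 0 < b := (two_le_of_mem_cycleType hb).trans_lt' two_pos
  rcases eq_or_ne a b with rfl | hab
  · have hpqa : p * q ∣ a := ((Nat.coprime_primes hp hq).mpr hpq).mul_dvd_of_dvd_of_dvd hpa hqb
    have := Nat.le_of_dvd ha0 hpqa
    have := Multiset.le_sum_of_mem ha
    nlinarith
  · have hb' : b ∈ σ.cycleType.erase a := (Multiset.mem_erase_of_ne hab.symm).mpr hb
    have hab_le : a + b ≤ σ.cycleType.sum := by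
      rw [← Multiset.cons_erase ha, Multiset.sum_cons]
      exact Nat.add_le_add_left (Multiset.le_sum_of_mem hb') a
    have := Nat.le_of_dvd ha0 hpa
    have := Nat.le_of_dvd hb0 hqb
    omega

end Equiv.Perm

theorem IsSimpleGroup.card_dvd_factorial_index {G : Type*} [Group G] [IsSimpleGroup G]
    {H : Subgroup G} [H.FiniteIndex] (hH : H ≠ ⊤) : Nat.card G ∣ H.index.factorial := by
  have hcore : H.normalCore = ⊥ :=
    (IsSimpleGroup.eq_bot_or_eq_top_of_normal _ H.normalCore_normal).resolve_right
      fun h => hH (top_le_iff.mp (h ▸ H.normalCore_le))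
  rw [← index_bot, ← hcore, normalCore_eq_ker, index_ker, index_eq_card, ← Nat.card_perm]
  exact card_subgroup_dvd_card _

section

variable {G : Type*} [Group G]

theorem Subgroup.index_centralizer_dvd_card_mulAut (P : Subgroup G) [hP : P.Normal] :
    (centralizer (P : Set G)).index ∣ Nat.card (MulAut P) := by
  have key := card_dvd_of_injective _ (QuotientGroup.kerLift_injective P.normalizerMonoidHom)
  rwa [normalizerMonoidHom_ker, ← index, ← relIndex, normalizer_eq_top_iff.mpr hP,
    relIndex_top_right] at key

variable [Finite G]

theorem exists_orderOf_eq_mul_of_normal {P : Subgroup G} [P.Normal] {p q : ℕ} [hp : Fact p.Prime]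
    [hq : Fact q.Prime] (hP : Nat.card P = p) (hpq : p ≠ q)
    (hqG : q ∣ Nat.card G / (Nat.card G).gcd (p - 1)) : ∃ g : G, orderOf g = p * q := by
  set C := centralizer (P : Set G)
  have hC : Nat.card G / (Nat.card G).gcd (p - 1) ∣ Nat.card C := by
    have : IsCyclic P := isCyclic_of_prime_card hP
    have hidx : C.index ∣ p - 1 := by
      simpa [IsCyclic.card_mulAut, hP, Nat.totient_prime hp.out] using
        P.index_centralizer_dvd_card_mulAut
    calc Nat.card G / (Nat.card G).gcd (p - 1) ∣ Nat.card G / C.index :=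
          Nat.div_dvd_div_left (Nat.gcd_dvd_left _ _) (Nat.dvd_gcd C.index_dvd_card hidx)
      _ = Nat.card C := by
          rw [← C.card_mul_index,
            Nat.mul_div_cancel _ (Nat.pos_of_ne_zero index_ne_zero_of_finite)]
  obtain ⟨x, hx⟩ := exists_prime_orderOf_dvd_card' (G := P) p hP.symm.dvd
  obtain ⟨y, hy⟩ := exists_prime_orderOf_dvd_card' (G := C) q (hqG.trans hC)
  have hxy : Commute (x : G) y := mem_centralizer_iff.mp y.2 x x.2
  have hcop : (orderOf (x : G)).Coprime (orderOf (y : G)) := by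
    rw [orderOf_coe, orderOf_coe, hx, hy]
    exact (Nat.coprime_primes hp.out hq.out).mpr hpq
  exact ⟨x * y, by rw [hxy.orderOf_mul_eq_mul_orderOf_of_coprime hcop, orderOf_coe, orderOf_coe,
    hx, hy]⟩

theorem Sylow.card_eq_of_card_eq_mul {p m : ℕ} [hp : Fact p.Prime] (hG : Nat.card G = p * m)
    (hm : ¬ p ∣ m) (P : Sylow p G) : Nat.card P = p := by
  have hm0 : m ≠ 0 := by
    rintro rfl
    exact hm (dvd_zero p)
  rw [P.card_eq_multiplicity, hG, Nat.factorization_mul hp.out.ne_zero hm0, Finsupp.add_apply,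
    hp.out.factorization_self, Nat.factorization_eq_zero_of_not_dvd hm, pow_one]

theorem Sylow.normal_of_forall_dvd_card {p : ℕ} [Fact p.Prime]
    (h : ∀ n ∈ (Nat.card G).divisors, n ≡ 1 [MOD p] → n = 1) (P : Sylow p G) : P.Normal := by
  have hdvd : Nat.card (Sylow p G) ∣ Nat.card G := P.card_dvd_index.trans (index_dvd_card _)
  have : Subsingleton (Sylow p G) := Finite.card_le_one_iff_subsingleton.mp
    (h _ (Nat.mem_divisors.mpr ⟨hdvd, Nat.card_pos.ne'⟩) (card_sylow_modEq_one p G)).le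
  exact P.normal_of_subsingleton

theorem exists_orderOf_eq_mul_of_card_eq {p q m : ℕ} [Fact p.Prime] [Fact q.Prime]
    (hG : Nat.card G = p * m) (hm : ¬ p ∣ m)
    (hsyl : ∀ n ∈ (p * m).divisors, n ≡ 1 [MOD p] → n = 1) (hpq : p ≠ q)
    (hq : q ∣ p * m / (p * m).gcd (p - 1)) : ∃ g : G, orderOf g = p * q := by
  obtain ⟨P⟩ : Nonempty (Sylow p G) := inferInstance
  have := P.normal_of_forall_dvd_card (hG ▸ hsyl)
  exact exists_orderOf_eq_mul_of_normal (P.card_eq_of_card_eq_mul hG hm) hpq (hG ▸ hq)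

theorem exists_subgroup_card_eq_of_card_eq_two_mul {m : ℕ} (hG : Nat.card G = 2 * m)
    (hm : Odd m) : ∃ K : Subgroup G, Nat.card K = m := by
  obtain ⟨P⟩ : Nonempty (Sylow 2 G) := inferInstance
  have hP : Nat.card P = 2 := P.card_eq_of_card_eq_mul hG hm.not_two_dvd_nat
  have : IsCyclic P := isCyclic_of_prime_card hP
  have hmin : (Nat.card G).minFac = 2 := (Nat.minFac_eq_two_iff _).mpr (hG ▸ dvd_mul_right 2 m)
  have hK := (IsCyclic.isComplement' hmin this).card_mul_card
  rw [hP, hG, mul_comm 2] at hK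
  exact ⟨_, Nat.eq_of_mul_eq_mul_right two_pos hK⟩

end

local notation "A₆" => alternatingGroup (Fin 6)

theorem card_A6 : Nat.card A₆ = 360 := by
  rw [nat_card_alternatingGroup, Nat.card_fin]
  rfl

theorem A6_six_le_index {H : Subgroup A₆} (hH : H ≠ ⊤) : 6 ≤ H.index := by
  have : IsSimpleGroup A₆ := alternatingGroup.isSimpleGroup (by simp)
  have hdvd := IsSimpleGroup.card_dvd_factorial_index hH
  rw [card_A6] at hdvd
  by_contra! h
  have : 360 ≤ Nat.factorial 5 :=
    (Nat.le_of_dvd (Nat.factorial_pos _) hdvd).trans (Nat.factorial_le (by omega))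
  exact absurd this (by decide)

theorem A6_orderOf_ne_five_mul {H : Subgroup A₆} (x : H) {q : ℕ} (hq : q.Prime) (hq5 : q ≠ 5) :
    orderOf x ≠ 5 * q := by
  intro hx
  rw [← orderOf_coe, ← orderOf_coe] at hx
  have := Perm.add_le_card_of_prime_dvd_orderOf Nat.prime_five hq hq5.symm
    (hx ▸ dvd_mul_right 5 q) (hx ▸ dvd_mul_left q 5)
  rw [Fintype.card_fin] at this
  have := hq.two_le
  omega

theorem A6_card_subgroup_ne_five_mul (H : Subgroup A₆) {m q : ℕ} (hq : q.Prime) (hq5 : q ≠ 5)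
    (hm : ¬ 5 ∣ m) (hsyl : ∀ n ∈ (5 * m).divisors, n ≡ 1 [MOD 5] → n = 1)
    (hqm : q ∣ 5 * m / (5 * m).gcd 4) : Nat.card H ≠ 5 * m := by
  intro hH
  have : Fact (Nat.Prime 5) := ⟨Nat.prime_five⟩
  have : Fact q.Prime := ⟨hq⟩
  obtain ⟨x, hx⟩ := exists_orderOf_eq_mul_of_card_eq hH hm hsyl hq5.symm hqm
  exact A6_orderOf_ne_five_mul x hq hq5 hx

theorem A6_card_subgroup_ne_thirty (H : Subgroup A₆) : Nat.card H ≠ 30 := by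
  intro hH
  obtain ⟨K, hK⟩ := exists_subgroup_card_eq_of_card_eq_two_mul (m := 15) hH (by decide)
  apply A6_card_subgroup_ne_five_mul (K.map H.subtype) (m := 3) Nat.prime_three
    (by decide) (by decide) (by decide) (by decide)
  rw [card_map_of_injective H.subtype_injective, hK]

/-- Every subgroup `H` of the alternating group A₆ with `|H| ≥ 30` has order
`36`, `60` or `360`. -/
theorem A6_large_subgroups (H : Subgroup (alternatingGroup (Fin 6)))
    (h : 30 ≤ Nat.card H) :
    Nat.card H = 36 ∨ Nat.card H = 60 ∨ Nat.card H = 360 := by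
  have hidx := H.index_mul_card
  rw [card_A6] at hidx
  rcases eq_or_ne H.index 1 with h1 | h1
  · rw [h1, one_mul] at hidx
    exact Or.inr (Or.inr hidx)
  have h6 := A6_six_le_index (mt index_eq_one.mpr h1)
  have h30 := A6_card_subgroup_ne_thirty H
  have h40 := A6_card_subgroup_ne_five_mul H (m := 8) Nat.prime_two
    (by decide) (by decide) (by decide) (by decide)
  have h45 := A6_card_subgroup_ne_five_mul H (m := 9) Nat.prime_three
    (by decide) (by decide) (by decide) (by decide)
  have h60 : Nat.card H ≤ 60 := by nlinarith
  interval_cases Nat.card H <;> omega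
end

section
/- If L, s and integers 2 ≤ r₁ ≤ ⋯ ≤ rₛ satisfy L = −2 + Σᵢ(1 − 1/rᵢ) with 0 < L < 1/6, then s = 3 and either r₁ = 2 with 3 ≤ r₂ ≤ 5 and r₃ = 1/(1/2 − L − 1/r₂), or (r₁,r₂,r₃) = (3,3,4) with L = 1/12, or (r₁,r₂,r₃) = (3,3,5) with L = 2/15. -/
/-!
Each summand `1 - 1/rᵢ` is `1/2` plus an excess `1/2 - 1/rᵢ ∈ [0, 1/2]`, and this excess is `0`
when `rᵢ = 2` and at least `1/6` otherwise. Hence `L = (s - 4)/2 + Σ excess`, which forces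
`3 ≤ s ≤ 4`, and `s = 4` is impossible because then `L` is a sum of excesses, so `L = 0` or
`L ≥ 1/6`. For `s = 3` the condition reads `5/6 < 1/r₁ + 1/r₂ + 1/r₃ < 1`, and comparing each
reciprocal with the largest of the remaining ones bounds the `rᵢ` one after another.
-/

open Finset

theorem Nat.one_div_cast_le_one_div_cast {m n : ℕ} (hm : 0 < m) (h : m ≤ n) :
    1 / (n : ℝ) ≤ 1 / m :=
  one_div_le_one_div_of_le (by exact_mod_cast hm) (by exact_mod_cast h)

theorem Nat.lt_of_one_div_lt_one_div {m n : ℕ} (hm : 0 < m) (h : 1 / (m : ℝ) < 1 / n) :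
    n < m := by
  by_contra! hmn
  exact h.not_ge (Nat.one_div_cast_le_one_div_cast hm hmn)

section Excess

variable {n : ℕ}

theorem half_sub_one_div_nonneg (hn : 2 ≤ n) : 0 ≤ 1 / 2 - 1 / (n : ℝ) := by
  have := Nat.one_div_cast_le_one_div_cast two_pos hn
  push_cast at this
  linarith

theorem half_sub_one_div_le_half : 1 / 2 - 1 / (n : ℝ) ≤ 1 / 2 := by
  have : 0 ≤ 1 / (n : ℝ) := by positivity
  linarith

theorem half_sub_one_div_eq_zero_or_ge (hn : 2 ≤ n) :
    1 / 2 - 1 / (n : ℝ) = 0 ∨ 1 / 6 ≤ 1 / 2 - 1 / (n : ℝ) := by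
  obtain rfl | h3 := hn.eq_or_lt
  · norm_num
  · right
    have := Nat.one_div_cast_le_one_div_cast three_pos h3
    push_cast at this
    linarith

end Excess

theorem sum_one_sub_eq_card_div_two_add {ι : Type*} (t : Finset ι) (x : ι → ℝ) :
    ∑ i ∈ t, (1 - x i) = #t / 2 + ∑ i ∈ t, (1 / 2 - x i) := by
  simp only [sum_sub_distrib, sum_const, nsmul_eq_mul]
  ring

theorem length_eq_three_of_pos_lt_one_sixth {L : ℝ} {s : ℕ} {r : ℕ → ℕ}
    (hr2 : ∀ i < s, 2 ≤ r i) (hL : L = -2 + ∑ i ∈ range s, (1 - 1 / (r i : ℝ)))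
    (hL0 : 0 < L) (hL6 : L < 1 / 6) : s = 3 := by
  set E := ∑ i ∈ range s, (1 / 2 - 1 / (r i : ℝ))
  have hLE : L = (s - 4) / 2 + E := by
    rw [hL, sum_one_sub_eq_card_div_two_add, card_range]; ring
  have hr2' : ∀ i ∈ range s, 2 ≤ r i := fun i hi => hr2 i (mem_range.mp hi)
  have hE0 : 0 ≤ E := sum_nonneg fun i hi => half_sub_one_div_nonneg (hr2' i hi)
  have hEs : E ≤ #(range s) • (1 / 2) :=
    sum_le_card_nsmul _ _ _ fun i _ => half_sub_one_div_le_half (n := r i)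
  rw [card_range, nsmul_eq_mul] at hEs
  have h2 : (2 : ℝ) < s := by linarith
  have h5 : (s : ℝ) < 5 := by linarith
  obtain rfl | rfl : s = 3 ∨ s = 4 := by norm_cast at h2 h5; omega
  · rfl
  norm_num at hLE
  obtain ⟨i, hi, hne⟩ := exists_ne_zero_of_sum_ne_zero (hLE ▸ hL0.ne')
  have hi6 := (half_sub_one_div_eq_zero_or_ge (hr2' i hi)).resolve_left hne
  have := single_le_sum (fun j hj => half_sub_one_div_nonneg (hr2' j hj)) hi
  linarith

section Triple

variable {L : ℝ} {a b c : ℕ}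

theorem triple_of_first_eq_two (hb : 0 < b) (hbc : b ≤ c)
    (hL : 1 / (2 : ℝ) + 1 / b + 1 / c = 1 - L) (hL0 : 0 < L) (hL6 : L < 1 / 6) :
    3 ≤ b ∧ b ≤ 5 ∧ (c : ℝ) = 1 / (1 / 2 - L - 1 / b) := by
  have hc : 0 < 1 / (c : ℝ) := by have : 0 < c := hb.trans_le hbc; positivity
  have hcb := Nat.one_div_cast_le_one_div_cast hb hbc
  have hb3 : 2 < b := Nat.lt_of_one_div_lt_one_div hb
    (by simp only [Nat.cast_ofNat]; linarith)
  have hb5 : b < 6 := Nat.lt_of_one_div_lt_one_div (by norm_num)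
    (by simp only [Nat.cast_ofNat]; linarith)
  refine ⟨hb3, Nat.lt_succ_iff.mp hb5, ?_⟩
  rw [show 1 / 2 - L - 1 / (b : ℝ) = 1 / c by linarith, one_div_one_div]

theorem triple_of_first_eq_three (hb : 3 ≤ b) (hbc : b ≤ c)
    (hL : 1 / (3 : ℝ) + 1 / b + 1 / c = 1 - L) (hL0 : 0 < L) (hL6 : L < 1 / 6) :
    b = 3 ∧ (c = 4 ∧ L = 1 / 12 ∨ c = 5 ∧ L = 2 / 15) := by
  have hcb := Nat.one_div_cast_le_one_div_cast (by omega) hbc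
  have hb4 : b < 4 := Nat.lt_of_one_div_lt_one_div (by norm_num)
    (by simp only [Nat.cast_ofNat]; linarith)
  obtain rfl : b = 3 := by omega
  have hc6 : c < 6 := Nat.lt_of_one_div_lt_one_div (by norm_num)
    (by simp only [Nat.cast_ofNat]; linarith)
  have hc3 : 3 < c := Nat.lt_of_one_div_lt_one_div (by omega)
    (by simp only [Nat.cast_ofNat] at hL ⊢; linarith)
  refine ⟨rfl, ?_⟩
  interval_cases c
  · left; norm_num at hL ⊢; linarith
  · right; norm_num at hL ⊢; linarith

theorem first_le_three (ha : 2 ≤ a) (hab : a ≤ b) (hbc : b ≤ c)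
    (hL : 1 / (a : ℝ) + 1 / b + 1 / c = 1 - L) (hL6 : L < 1 / 6) : a ≤ 3 := by
  have hba := Nat.one_div_cast_le_one_div_cast (by omega) hab
  have hcb := Nat.one_div_cast_le_one_div_cast (by omega) hbc
  have : a < 4 := Nat.lt_of_one_div_lt_one_div (by norm_num)
    (by simp only [Nat.cast_ofNat]; linarith)
  omega

theorem triple_cases_of_pos_lt_one_sixth (ha : 2 ≤ a) (hab : a ≤ b) (hbc : b ≤ c)
    (hL : 1 / (a : ℝ) + 1 / b + 1 / c = 1 - L) (hL0 : 0 < L) (hL6 : L < 1 / 6) :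
    (a = 2 ∧ 3 ≤ b ∧ b ≤ 5 ∧ (c : ℝ) = 1 / (1 / 2 - L - 1 / b))
      ∨ (a = 3 ∧ b = 3 ∧ c = 4 ∧ L = 1 / 12)
      ∨ (a = 3 ∧ b = 3 ∧ c = 5 ∧ L = 2 / 15) := by
  have ha3 := first_le_three ha hab hbc hL hL6
  obtain rfl | rfl : a = 2 ∨ a = 3 := by omega
  · exact Or.inl ⟨rfl, triple_of_first_eq_two (by omega) hbc (by exact_mod_cast hL) hL0 hL6⟩
  · obtain ⟨rfl, ⟨rfl, hL'⟩ | ⟨rfl, hL'⟩⟩ :=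
      triple_of_first_eq_three hab hbc (by exact_mod_cast hL) hL0 hL6
    · exact Or.inr (Or.inl ⟨rfl, rfl, rfl, hL'⟩)
    · exact Or.inr (Or.inr ⟨rfl, rfl, rfl, hL'⟩)

end Triple

/-- Classification of ramification data for a genus-0 quotient when
`0 < L < 1/6`: `s = 3` and the triple of indices is `(2, r₂, r₃)` with
`3 ≤ r₂ ≤ 5` and `r₃ = 1/(1/2 - L - 1/r₂)`, or `(3,3,4)` with `L = 1/12`,
or `(3,3,5)` with `L = 2/15`. -/
theorem riemann_hurwitz_small_L (L : ℝ) (s : ℕ) (r : ℕ → ℕ)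
    (hr2 : ∀ i < s, 2 ≤ r i)
    (hmono : ∀ i j, i ≤ j → j < s → r i ≤ r j)
    (hL : L = -2 + ∑ i ∈ Finset.range s, (1 - 1 / (r i : ℝ)))
    (hL0 : 0 < L) (hL6 : L < 1 / 6) :
    s = 3 ∧
      ((r 0 = 2 ∧ 3 ≤ r 1 ∧ r 1 ≤ 5 ∧ (r 2 : ℝ) = 1 / (1 / 2 - L - 1 / (r 1 : ℝ)))
        ∨ (r 0 = 3 ∧ r 1 = 3 ∧ r 2 = 4 ∧ L = 1 / 12)
        ∨ (r 0 = 3 ∧ r 1 = 3 ∧ r 2 = 5 ∧ L = 2 / 15)) := by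
  obtain rfl := length_eq_three_of_pos_lt_one_sixth hr2 hL hL0 hL6
  simp only [sum_range_succ, sum_range_zero] at hL
  refine ⟨rfl, triple_cases_of_pos_lt_one_sixth (hr2 0 (by norm_num))
    (hmono 0 1 (by norm_num) (by norm_num)) (hmono 1 2 (by norm_num) (by norm_num))
    (by linarith) hL0 hL6⟩
end

section
/- Suppose κ, λ, μ, α, β, γ, δ ∈ ℂ with α ≠ 0 satisfy: κ²w⁶ + 2κλw⁵ + (2κμ + λ²)w⁴ + 2λμw³ + μ²w² − w + 1 = (αw³ + βw² + γw + δ)² as polynomials in w, where additionally κ = α. Then no such solution exists (the system is inconsistent). -/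
/-!
Write `p = κw³ + λw² + μw` and `q = αw³ + βw² + γw + δ`. The identity says `p² + (1 - w) = q²`,
so `p + q`, a cubic with leading coefficient `2α ≠ 0`, divides the linear polynomial `w - 1`.
-/

open Polynomial

theorem Polynomial.natDegree_add_le_of_sq_sub_sq_eq {R : Type*} [CommRing R] [IsDomain R]
    {p q r : R[X]} (h : p ^ 2 - q ^ 2 = r) (hr : r ≠ 0) : (p + q).natDegree ≤ r.natDegree :=
  natDegree_le_of_dvd ⟨p - q, by rw [← h]; ring⟩ hr

/-- There are no `κ, λ, μ, α, β, γ, δ ∈ ℂ` with `α ≠ 0`, `κ = α`, such that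
`κ²w⁶ + 2κλw⁵ + (2κμ + λ²)w⁴ + 2λμw³ + μ²w² − w + 1 = (αw³ + βw² + γw + δ)²`
as polynomials in `w`. -/
theorem genus10_case_i_impossible :
    ¬ ∃ (κ l μ α β γ δ : ℂ), α ≠ 0 ∧ κ = α ∧
      ∀ w : ℂ,
        κ ^ 2 * w ^ 6 + 2 * κ * l * w ^ 5 + (2 * κ * μ + l ^ 2) * w ^ 4 +
            2 * l * μ * w ^ 3 + μ ^ 2 * w ^ 2 - w + 1 =
          (α * w ^ 3 + β * w ^ 2 + γ * w + δ) ^ 2 := by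
  rintro ⟨κ, l, μ, α, β, γ, δ, hα, rfl, h⟩
  set p : ℂ[X] := C κ * X ^ 3 + C l * X ^ 2 + C μ * X
  set q : ℂ[X] := C κ * X ^ 3 + C β * X ^ 2 + C γ * X + C δ
  have hpq : p ^ 2 - q ^ 2 = X - C 1 := funext fun w => by
    simp only [p, q, eval_sub, eval_pow, eval_add, eval_mul, eval_C, eval_X]
    linear_combination h w
  have hsum : (p + q).natDegree = 3 := by
    have : p + q = C (2 * κ) * X ^ 3 + C (l + β) * X ^ 2 + C (μ + γ) * X + C δ := by
      simp only [p, q, C_mul, C_add, C_ofNat]; ring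
    rw [this, natDegree_cubic (mul_ne_zero two_ne_zero hα)]
  have := natDegree_add_le_of_sq_sub_sq_eq hpq (X_sub_C_ne_zero 1)
  rw [hsum, natDegree_X_sub_C] at this
  omega
end

section
/- If κ, λ ∈ ℂ and the polynomial κ²w⁶ + 2κλw⁵ + λ²w⁴ − w + 1 factors as (w² + αw + β)²(γw² + δw + ε) for some α, β, γ, δ, ε ∈ ℂ, then 50κ = −λ(256λ² − 25) and 442368λ⁴ − 72000λ² + 3125 = 0. -/
/-!
Write `u = w²(κw + λ)` and `P = u² - (w - 1)` for the numerator of `f - 1`. A double root of `P`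
is a root of `(w - 1)P' - P = u · w · (5κw² + (3λ - 6κ)w - 4λ)`, and it is never a root of `u`
(or of `w`, which divides `u`), because `2uu' - P' = 1`. So the squared factor `w² + αw + β`
divides this critical quadratic, which pins down `5κα = 3λ - 6κ` and `5κβ = -4λ`.
With `λ = tκ`, the coefficients of `w³` and `w²` in `(w² + αw + β)²(γw² + δw + ε)` then force
`t² - 9t + 54 = 0`, the constant coefficient gives `κ²t²(t - 27) = -125/64`, and both identities
follow.
-/

open Polynomial

namespace Genus10

section CommRing

variable {R : Type*} [CommRing R]

noncomputable def numeratorSqrt (κ l : R) : R[X] := C κ * X ^ 3 + C l * X ^ 2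

/-- The numerator of `f - 1`, where `f = w⁴(κw + λ)² / (w - 1) = numeratorSqrt² / (w - 1)`. -/
noncomputable def fiberPoly (κ l : R) : R[X] := numeratorSqrt κ l ^ 2 - (X - 1)

/-- Its roots are the critical points of `f` other than `0`, `-λ/κ` and `∞`. -/
noncomputable def critQuadratic (κ l : R) : R[X] :=
  C (5 * κ) * X ^ 2 + C (3 * l - 6 * κ) * X + C (-4 * l)

theorem eval_fiberPoly (κ l w : R) :
    (fiberPoly κ l).eval w = κ ^ 2 * w ^ 6 + 2 * κ * l * w ^ 5 + l ^ 2 * w ^ 4 - w + 1 := by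
  simp only [fiberPoly, numeratorSqrt, eval_sub, eval_pow, eval_add, eval_mul, eval_C, eval_X,
    eval_one]
  ring

theorem derivative_fiberPoly (κ l : R) :
    derivative (fiberPoly κ l) = 2 * numeratorSqrt κ l * derivative (numeratorSqrt κ l) - 1 := by
  simp [fiberPoly, derivative_sq, C_ofNat]

theorem sub_one_mul_derivative_fiberPoly_sub (κ l : R) :
    (X - 1) * derivative (fiberPoly κ l) - fiberPoly κ l =
      numeratorSqrt κ l * X * critQuadratic κ l := by
  rw [derivative_fiberPoly, fiberPoly, numeratorSqrt, critQuadratic]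
  simp only [derivative_C_mul_X_pow, map_add, map_sub, map_mul, map_neg,
    Nat.cast_ofNat, C_ofNat]
  ring

theorem dvd_critQuadratic_of_sq_dvd_fiberPoly {κ l : R} {q : R[X]}
    (hq : q ^ 2 ∣ fiberPoly κ l) : q ∣ critQuadratic κ l := by
  have hP : q ∣ fiberPoly κ l := (dvd_pow_self q two_ne_zero).trans hq
  obtain ⟨a, ha⟩ : q ∣ derivative (fiberPoly κ l) := by
    simpa using pow_sub_one_dvd_derivative_of_pow_dvd hq
  have hu : IsCoprime (numeratorSqrt κ l) q :=
    ⟨2 * derivative (numeratorSqrt κ l), -a, by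
      linear_combination (derivative_fiberPoly κ l).symm.trans ha⟩
  have hX : IsCoprime X q :=
    hu.of_isCoprime_of_dvd_left ⟨X * (C κ * X + C l), by rw [numeratorSqrt]; ring⟩
  refine (hu.mul_left hX).symm.dvd_of_dvd_mul_left ?_
  rw [← sub_one_mul_derivative_fiberPoly_sub]
  exact dvd_sub (dvd_mul_of_dvd_right ⟨a, ha⟩ _) hP

theorem critQuadratic_coeff_relations [Nontrivial R] {κ l α β : R}
    (h : X ^ 2 + C α * X + C β ∣ critQuadratic κ l) :
    5 * κ * α = 3 * l - 6 * κ ∧ 5 * κ * β = -4 * l := by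
  have hmonic : (X ^ 2 + C α * X + C β).Monic := by monicity!
  have hdeg : (X ^ 2 + C α * X + C β).natDegree = 2 := by compute_degree!
  obtain ⟨c, hc⟩ : ∃ c, critQuadratic κ l = C c * (X ^ 2 + C α * X + C β) :=
    ⟨_, eq_leadingCoeff_mul_of_monic_of_dvd_of_natDegree_le hmonic h
      (hdeg.symm ▸ natDegree_quadratic_le)⟩
  have h2 := congrArg (coeff · 2) hc
  have h1 := congrArg (coeff · 1) hc
  have h0 := congrArg (coeff · 0) hc
  simp only [critQuadratic, coeff_add, coeff_C, coeff_C_mul, coeff_X_pow, coeff_X] at h2 h1 h0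
  norm_num at h2 h1 h0
  subst h2
  exact ⟨h1.symm, by linear_combination -h0⟩

end CommRing

section Field

variable {K : Type*} [Field K]

theorem coeff_relations_of_forall_eq [Infinite K] {κ l α β γ δ ε : K}
    (h : ∀ w : K, κ ^ 2 * w ^ 6 + 2 * κ * l * w ^ 5 + l ^ 2 * w ^ 4 - w + 1 =
        (w ^ 2 + α * w + β) ^ 2 * (γ * w ^ 2 + δ * w + ε)) :
    γ = κ ^ 2 ∧ δ + 2 * α * γ = 2 * κ * l ∧ ε + 2 * α * δ + (α ^ 2 + 2 * β) * γ = l ^ 2 ∧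
      2 * α * ε + (α ^ 2 + 2 * β) * δ + 2 * α * β * γ = 0 ∧
      (α ^ 2 + 2 * β) * ε + 2 * α * β * δ + β ^ 2 * γ = 0 ∧ β ^ 2 * ε = 1 := by
  have key : (C (κ ^ 2) * X ^ 6 + C (2 * κ * l) * X ^ 5 + C (l ^ 2) * X ^ 4 - X + 1 : K[X]) =
      C γ * X ^ 6 + C (δ + 2 * α * γ) * X ^ 5 + C (ε + 2 * α * δ + (α ^ 2 + 2 * β) * γ) * X ^ 4 +
      C (2 * α * ε + (α ^ 2 + 2 * β) * δ + 2 * α * β * γ) * X ^ 3 +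
      C ((α ^ 2 + 2 * β) * ε + 2 * α * β * δ + β ^ 2 * γ) * X ^ 2 +
      C (2 * α * β * ε + β ^ 2 * δ) * X + C (β ^ 2 * ε) :=
    funext fun w => by
      simp only [map_pow, map_mul, eval_add, eval_sub, eval_mul, eval_pow, eval_C, eval_X,
        eval_one]
      linear_combination h w
  have c6 := congrArg (coeff · 6) key
  have c5 := congrArg (coeff · 5) key
  have c4 := congrArg (coeff · 4) key
  have c3 := congrArg (coeff · 3) key
  have c2 := congrArg (coeff · 2) key
  have c0 := congrArg (coeff · 0) key
  simp only [coeff_add, coeff_sub, coeff_C_mul_X_pow, coeff_C_mul_X, coeff_C, coeff_X, coeff_one]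
    at c6 c5 c4 c3 c2 c0
  norm_num at c6 c5 c4 c3 c2 c0
  exact ⟨c6.symm, c5.symm, c4.symm, c3.symm, c2.symm, c0.symm⟩

variable [CharZero K]

theorem ne_zero_of_coeff_relations {κ l α β γ δ ε : K} (hα : 5 * κ * α = 3 * l - 6 * κ)
    (h6 : γ = κ ^ 2) (h5 : δ + 2 * α * γ = 2 * κ * l)
    (h4 : ε + 2 * α * δ + (α ^ 2 + 2 * β) * γ = l ^ 2) (h0 : β ^ 2 * ε = 1) : κ ≠ 0 := by
  rintro rfl
  obtain rfl : l = 0 := by linear_combination (-1 / 3 : K) * hα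
  subst h6
  obtain rfl : δ = 0 := by linear_combination h5
  obtain rfl : ε = 0 := by linear_combination h4
  simp at h0

theorem eq_and_quartic_of_coeff_relations {κ l α β γ δ ε : K}
    (hα : 5 * κ * α = 3 * l - 6 * κ) (hβ : 5 * κ * β = -4 * l) (h6 : γ = κ ^ 2)
    (h5 : δ + 2 * α * γ = 2 * κ * l) (h4 : ε + 2 * α * δ + (α ^ 2 + 2 * β) * γ = l ^ 2)
    (h3 : 2 * α * ε + (α ^ 2 + 2 * β) * δ + 2 * α * β * γ = 0)
    (h2 : (α ^ 2 + 2 * β) * ε + 2 * α * β * δ + β ^ 2 * γ = 0) (h0 : β ^ 2 * ε = 1) :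
    50 * κ = -l * (256 * l ^ 2 - 25) ∧ 442368 * l ^ 4 - 72000 * l ^ 2 + 3125 = 0 := by
  have hκ := ne_zero_of_coeff_relations hα h6 h5 h4 h0
  have hκ2 : κ ^ 2 ≠ 0 := pow_ne_zero 2 hκ
  obtain ⟨t, rfl⟩ : ∃ t, l = t * κ := ⟨l / κ, by field_simp⟩
  obtain rfl : α = (3 * t - 6) / 5 := mul_left_cancel₀ hκ (by linear_combination hα / 5)
  obtain rfl : β = -4 * t / 5 := mul_left_cancel₀ hκ (by linear_combination hβ / 5)
  subst h6
  obtain rfl : δ = κ ^ 2 * (4 * (t + 3) / 5) := by linear_combination h5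
  obtain rfl : ε = κ ^ 2 * (-4 * (2 * t ^ 2 - 13 * t - 27) / 25) := by linear_combination h4
  have h3' : (3 * t + 4) * (t ^ 2 - 9 * t + 54) = 0 :=
    mul_left_cancel₀ hκ2 (by linear_combination (-125 / 4 : K) * h3)
  have h2' : (18 * t ^ 2 + 13 * t - 18) * (t ^ 2 - 9 * t + 54) = 0 :=
    mul_left_cancel₀ hκ2 (by linear_combination (-625 / 4 : K) * h2)
  -- `3t + 4` and `18t² + 13t - 18` are coprime
  have ht_quadratic : t ^ 2 - 9 * t + 54 = 0 := by
    linear_combination (-3 / 10 : K) * h2' + (3 / 10 : K) * (6 * t - 11 / 3) * h3'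
  have hκt : κ ^ 2 * t ^ 2 * (t - 27) = -125 / 64 := by
    linear_combination (-125 / 64 : K) * h0 - (2 / 5 : K) * κ ^ 2 * t ^ 2 * ht_quadratic
  have ht : t - 27 ≠ 0 := by
    intro h
    rw [h, mul_zero] at hκt
    norm_num at hκt
  constructor
  · have hfactored : (t - 27) * (256 * t ^ 3 * κ ^ 2 - 25 * t + 50) = 0 := by
      linear_combination 256 * t * hκt - 25 * ht_quadratic
    linear_combination κ * (mul_eq_zero.mp hfactored).resolve_left ht
  · refine mul_left_cancel₀ (pow_ne_zero 2 ht) ?_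
    linear_combination (442368 * (κ ^ 2 * t ^ 2 * (t - 27) - 125 / 64) - 72000 * (t - 27)) * hκt +
      3125 * ht_quadratic

end Field

end Genus10

/-- If `κ²w⁶ + 2κλw⁵ + λ²w⁴ − w + 1` factors as `(w² + αw + β)²(γw² + δw + ε)`,
then `50κ = −λ(256λ² − 25)` and `442368λ⁴ − 72000λ² + 3125 = 0`. -/
theorem genus10_elimination (κ l α β γ δ ε : ℂ)
    (h : ∀ w : ℂ,
      κ ^ 2 * w ^ 6 + 2 * κ * l * w ^ 5 + l ^ 2 * w ^ 4 - w + 1 =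
        (w ^ 2 + α * w + β) ^ 2 * (γ * w ^ 2 + δ * w + ε)) :
    50 * κ = -l * (256 * l ^ 2 - 25) ∧
      442368 * l ^ 4 - 72000 * l ^ 2 + 3125 = 0 := by
  have hfactor : Genus10.fiberPoly κ l =
      (X ^ 2 + C α * X + C β) ^ 2 * (C γ * X ^ 2 + C δ * X + C ε) :=
    funext fun w => by simp [Genus10.eval_fiberPoly, h w]
  obtain ⟨hα, hβ⟩ := Genus10.critQuadratic_coeff_relations
    (Genus10.dvd_critQuadratic_of_sq_dvd_fiberPoly ⟨_, hfactor⟩)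
  obtain ⟨h6, h5, h4, h3, h2, h0⟩ := Genus10.coeff_relations_of_forall_eq h
  exact Genus10.eq_and_quartic_of_coeff_relations hα hβ h6 h5 h4 h3 h2 h0
end

section
/- If κ, λ ∈ ℂ with κ ≠ 0 and the polynomial κw⁶ + λw⁵ − w + 1 factors as (w² + αw + β)²(κw² + γw + δ) for some α, β, γ, δ ∈ ℂ, then 216λ² − 799λ + 64 = 954κ and (16λ − 1)(11664λ² − 1647λ + 64) = 0. -/
/-!
Substituting `w ↦ 1/w` (and normalising by `β²δ = 1`, the constant coefficient) turns the
factorisation into a monic one, `w⁶ - w⁵ + λw + κ = (w² + aw + b)²(w² + cw + d)`. Comparing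
coefficients, `c` and `d` are linear in `a, b`, and the two remaining equations force
`a³(2a + 1)(6a² + 9a + 4) = 0`. The root `a = 0` gives `κ = 0`; `a = -1/2` gives `λ = 1/16`,
`κ = 1/64`; and a root of `6a² + 9a + 4` gives `d = b`, `λ = -b²`, `κ = b³` with
`108b² + 9b + 8 = 0`, from which both relations follow.
-/

open Polynomial in
theorem eq_zero_of_forall_sum_mul_pow_eq_zero {R : Type*} [CommRing R] [IsDomain R] [Infinite R]
    {n : ℕ} (e : Fin n → R) (h : ∀ x : R, ∑ i, e i * x ^ (i : ℕ) = 0) : e = 0 := by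
  set p : R[X] := ∑ i, C (e i) * X ^ (i : ℕ)
  have hp : p = 0 := Polynomial.funext fun x => by simpa [p, eval_finsetSum] using h x
  funext k
  simpa [p, finsetSum_coeff, coeff_C_mul_X_pow, Fin.val_inj] using congrArg (coeff · k) hp

section

variable {K : Type*} [Field K]

theorem forall_reverse_eq_sq_mul {κ l α β γ δ : K}
    (h : ∀ w : K, κ * w ^ 6 + l * w ^ 5 - w + 1 =
      (w ^ 2 + α * w + β) ^ 2 * (κ * w ^ 2 + γ * w + δ)) (w : K) :
    w ^ 6 - w ^ 5 + l * w + κ = (w ^ 2 + α / β * w + β⁻¹) ^ 2 * (w ^ 2 + γ / δ * w + κ / δ) := by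
  have hβδ : β ^ 2 * δ = 1 := by simpa using (h 0).symm
  have hβ : β ≠ 0 := by rintro rfl; simp at hβδ
  have hδ : δ ≠ 0 := by rintro rfl; simp at hβδ
  rcases eq_or_ne w 0 with rfl | hw
  · field_simp
    linear_combination κ * hβδ
  · have := h w⁻¹
    field_simp at this ⊢
    linear_combination this + (w ^ 6 - w ^ 5 + l * w + κ) * hβδ

theorem coeff_eqs_of_forall_eq_sq_mul [Infinite K] {κ l a b c d : K}
    (h : ∀ w : K, w ^ 6 - w ^ 5 + l * w + κ = (w ^ 2 + a * w + b) ^ 2 * (w ^ 2 + c * w + d)) :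
    b ^ 2 * d - κ = 0 ∧ 2 * a * b * d + b ^ 2 * c - l = 0 ∧
      (a ^ 2 + 2 * b) * d + 2 * a * b * c + b ^ 2 = 0 ∧
      2 * a * d + (a ^ 2 + 2 * b) * c + 2 * a * b = 0 ∧
      d + 2 * a * c + a ^ 2 + 2 * b = 0 ∧ c + 2 * a + 1 = 0 := by
  have := eq_zero_of_forall_sum_mul_pow_eq_zero
    ![b ^ 2 * d - κ, 2 * a * b * d + b ^ 2 * c - l, (a ^ 2 + 2 * b) * d + 2 * a * b * c + b ^ 2,
      2 * a * d + (a ^ 2 + 2 * b) * c + 2 * a * b, d + 2 * a * c + a ^ 2 + 2 * b, c + 2 * a + 1]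
    fun w => by
      simp only [Fin.sum_univ_six, Matrix.cons_val, Fin.coe_ofNat_eq_mod]
      linear_combination -(h w)
  simpa [funext_iff, Fin.forall_fin_succ] using this

theorem relations_of_forall_eq_sq_mul [CharZero K] {κ l a b c d : K} (hκ : κ ≠ 0)
    (h : ∀ w : K, w ^ 6 - w ^ 5 + l * w + κ = (w ^ 2 + a * w + b) ^ 2 * (w ^ 2 + c * w + d)) :
    216 * l ^ 2 - 799 * l + 64 = 954 * κ ∧
      (16 * l - 1) * (11664 * l ^ 2 - 1647 * l + 64) = 0 := by
  obtain ⟨hκ_eq, hl_eq, h2, h3, h4, h5⟩ := coeff_eqs_of_forall_eq_sq_mul h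
  have hc : c = -1 - 2 * a := by linear_combination h5
  have hd : d = 3 * a ^ 2 + 2 * a - 2 * b := by linear_combination h4 - 2 * a * h5
  subst hc hd
  have hb : b * (6 * a + 2) = a ^ 2 * (4 * a + 3) := by linear_combination -h3
  have h2' : 3 * a ^ 4 + 2 * a ^ 3 + 2 * a * b - 3 * b ^ 2 = 0 := by linear_combination h2
  have ha : a ^ 3 * (2 * a + 1) * (6 * a ^ 2 + 9 * a + 4) = 0 := by
    -- multiply `h2'` by `(6a + 2)²` and eliminate `b(6a + 2)` with `hb`
    linear_combination ((6 * a + 2) ^ 2 * h2'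
      - (2 * a * (6 * a + 2) - 3 * (b * (6 * a + 2) + a ^ 2 * (4 * a + 3))) * hb) / 5
  rcases mul_eq_zero.1 ha with ha | hm
  · rcases mul_eq_zero.1 ha with ha0 | ha2
    · obtain rfl : a = 0 := pow_eq_zero_iff three_ne_zero |>.1 ha0
      obtain rfl : b = 0 := by linear_combination hb / 2
      exact absurd (by linear_combination -hκ_eq) hκ
    · obtain rfl : a = -1 / 2 := by linear_combination ha2 / 2
      obtain rfl : b = -1 / 4 := by linear_combination -hb
      obtain rfl : l = 1 / 16 := by linear_combination -hl_eq
      obtain rfl : κ = 1 / 64 := by linear_combination -hκ_eq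
      norm_num
  · -- `-(6a + 7)/10` is the inverse of `6a + 2` modulo `6a² + 9a + 4`
    have hb_lin : b = -(5 * a + 4) / 6 := by
      linear_combination (-(6 * a + 7) / 10) * hb
        + (-(6 * a + 7) * (2 * a + 1) / 30 + (3 / 5) * (b + (5 * a + 4) / 6)) * hm
    have hd : 3 * a ^ 2 + 2 * a - 2 * b = b := by linear_combination hm / 2 - 3 * hb_lin
    have hq : 108 * b ^ 2 + 9 * b + 8 = 0 := by
      linear_combination (25 / 2) * hm + (108 * (b - (5 * a + 4) / 6) + 9) * hb_lin
    obtain rfl : l = -b ^ 2 := by linear_combination -hl_eq + 2 * a * b * hd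
    obtain rfl : κ = b ^ 3 := by linear_combination -hκ_eq + b ^ 2 * hd
    exact ⟨by linear_combination (2 * b ^ 2 - 9 * b + 8) * hq,
      by linear_combination (-16 * b ^ 2 - 1) * (108 * b ^ 2 - 9 * b + 8) * hq⟩

end

/-- If `κ ≠ 0` and `κw⁶ + λw⁵ − w + 1` factors as `(w² + αw + β)²(κw² + γw + δ)`,
then `216λ² − 799λ + 64 = 954κ` and `(16λ − 1)(11664λ² − 1647λ + 64) = 0`. -/
theorem genus19_elimination (κ l α β γ δ : ℂ) (hκ : κ ≠ 0)
    (h : ∀ w : ℂ,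
      κ * w ^ 6 + l * w ^ 5 - w + 1 =
        (w ^ 2 + α * w + β) ^ 2 * (κ * w ^ 2 + γ * w + δ)) :
    216 * l ^ 2 - 799 * l + 64 = 954 * κ ∧
      (16 * l - 1) * (11664 * l ^ 2 - 1647 * l + 64) = 0 :=
  relations_of_forall_eq_sq_mul hκ (forall_reverse_eq_sq_mul h)
end

section
/- Let f(w) = w⁵(κw + λ)/(w − 1) with κ, λ ∈ ℂ, κ ≠ 0. Then f(−λ/(κw)) = (λ⁶/κ⁴) · (1/f(w)) as rational functions. In particular, if λ³/κ² = −1, then f(−λ/(κw)) = 1/f(w). -/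
/-! The substitution `w ↦ −λ/(κw)` exchanges the factors of `f`: it turns `κw + λ` into
`λ(w − 1)/w` and `w − 1` into `−(κw + λ)/(κw)`, so zeros and poles of `f` swap and only the
constant `λ⁶/κ⁴` is left over. -/

namespace Genus19

variable {K : Type*} [Field K] {κ w : K} (l : K)

def f (κ l w : K) : K := w ^ 5 * (κ * w + l) / (w - 1)

lemma mul_neg_div_add (hκ : κ ≠ 0) (hw : w ≠ 0) :
    κ * (-l / (κ * w)) + l = l * (w - 1) / w := by
  field_simp
  ring

lemma neg_div_sub_one (hκ : κ ≠ 0) (hw : w ≠ 0) :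
    -l / (κ * w) - 1 = -(κ * w + l) / (κ * w) := by
  field_simp
  ring

theorem f_neg_div (hκ : κ ≠ 0) (hw : w ≠ 0) :
    f κ l (-l / (κ * w)) = l ^ 6 / κ ^ 4 * (1 / f κ l w) := by
  rw [f, f, mul_neg_div_add l hκ hw, neg_div_sub_one l hκ hw, one_div_div, div_div_eq_mul_div]
  field_simp

end Genus19

theorem genus19_functional_equation_general (κ l w : ℂ) (hκ : κ ≠ 0)
    (hw0 : w ≠ 0) :
    ((-l / (κ * w)) ^ 5 * (κ * (-l / (κ * w)) + l) / (-l / (κ * w) - 1) =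
        (l ^ 6 / κ ^ 4) * (1 / (w ^ 5 * (κ * w + l) / (w - 1)))) ∧
      (l ^ 3 / κ ^ 2 = -1 →
        (-l / (κ * w)) ^ 5 * (κ * (-l / (κ * w)) + l) / (-l / (κ * w) - 1) =
          1 / (w ^ 5 * (κ * w + l) / (w - 1))) := by
  have hf : Genus19.f κ l (-l / (κ * w)) = l ^ 6 / κ ^ 4 * (1 / Genus19.f κ l w) :=
    Genus19.f_neg_div l hκ hw0
  refine ⟨hf, fun hl => ?_⟩
  have hconst : l ^ 6 / κ ^ 4 = 1 := by
    rw [show l ^ 6 / κ ^ 4 = (l ^ 3 / κ ^ 2) ^ 2 by ring, hl]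
    norm_num
  rw [hconst, one_mul] at hf
  exact hf

/-- For `f(w) = w⁵(κw + λ)/(w − 1)` with `κ ≠ 0`, one has
`f(−λ/(κw)) = (λ⁶/κ⁴) · (1/f(w))`; in particular, if `λ³/κ² = −1` then
`f(−λ/(κw)) = 1/f(w)`. -/
theorem genus19_functional_equation (κ l w : ℂ) (hκ : κ ≠ 0)
    (hw0 : w ≠ 0) (hw1 : w ≠ 1) (hwl : κ * w + l ≠ 0) :
    ((-l / (κ * w)) ^ 5 * (κ * (-l / (κ * w)) + l) / (-l / (κ * w) - 1) =
        (l ^ 6 / κ ^ 4) * (1 / (w ^ 5 * (κ * w + l) / (w - 1)))) ∧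
      (l ^ 3 / κ ^ 2 = -1 →
        (-l / (κ * w)) ^ 5 * (κ * (-l / (κ * w)) + l) / (-l / (κ * w) - 1) =
          1 / (w ^ 5 * (κ * w + l) / (w - 1))) :=
  genus19_functional_equation_general κ l w hκ hw0
end

section
/- The discriminant of the polynomial p(w) = w⁶ + 4w⁵ + 20w⁴ − 256t·w + 256t over ℂ(t) equals −879609302220800000t³ + 2638827906662400000t⁴ − 2638827906662400000t⁵ + 879609302220800000t⁶, which has odd order of vanishing (order 3) at t = 0 and hence is not a square in ℂ(t). -/
open Polynomial

lemma genus10_cubic_roots : ∃ a b c : ℂ, a + b + c = -2 ∧ a*b + b*c + c*a = 8 ∧ a*b*c = 16 := by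
  have hmon : (X^3 + 2*X^2 + 8*X - 16 : ℂ[X]).Monic := by monicity!
  have hdeg : (X^3 + 2*X^2 + 8*X - 16 : ℂ[X]).natDegree = 3 := by compute_degree!
  have hsp : Splits (X^3 + 2*X^2 + 8*X - 16 : ℂ[X]) :=
    IsAlgClosed.splits _
  have hcard : Multiset.card (X^3 + 2*X^2 + 8*X - 16 : ℂ[X]).roots = 3 := by
    rw [splits_iff_card_roots] at hsp; rw [hsp, hdeg]
  obtain ⟨a, b, c, habc⟩ := Multiset.card_eq_three.mp hcard
  have hfact : (X^3 + 2*X^2 + 8*X - 16 : ℂ[X]) = (X - C a) * ((X - C b) * (X - C c)) := by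
    have := hsp.eq_prod_roots_of_monic hmon
    rw [habc] at this
    simpa [map_ofNat] using this
  have hev : ∀ x : ℂ, x^3 + 2*x^2 + 8*x - 16 = (x - a) * ((x - b) * (x - c)) := by
    intro x
    have := congrArg (eval x) hfact
    simpa [map_ofNat] using this
  refine ⟨a, b, c, ?_, ?_, ?_⟩
  · linear_combination (1/2 : ℂ) * hev 1 + (1/2 : ℂ) * hev (-1) - hev 0
  · linear_combination (1/2 : ℂ) * hev (-1) - (1/2 : ℂ) * hev 1
  · linear_combination hev 0

/-- The discriminant of `p(w) = w⁶ + 4w⁵ + 20w⁴ − 256t·w + 256t` over `ℂ(t)`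
(computed as the square of the product of differences of the roots in any
splitting field) equals
`−879609302220800000t³ + 2638827906662400000t⁴ − 2638827906662400000t⁵ + 879609302220800000t⁶`,
and this element is not a square in `ℂ(t)`. -/
theorem genus10_discriminant_not_square
    (L : Type*) [Field L] [Algebra (RatFunc ℂ) L] (ρ : Fin 6 → L)
    (hsplit :
      (X ^ 6 + 4 * X ^ 5 + 20 * X ^ 4
          - C (algebraMap (RatFunc ℂ) L (256 * RatFunc.X)) * X
          + C (algebraMap (RatFunc ℂ) L (256 * RatFunc.X)) : Polynomial L)
        = ∏ i : Fin 6, (X - C (ρ i))) :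
    (∏ i : Fin 6, ∏ j ∈ Finset.Ioi i, (ρ j - ρ i)) ^ 2
        = algebraMap (RatFunc ℂ) L
            (-879609302220800000 * RatFunc.X ^ 3
              + 2638827906662400000 * RatFunc.X ^ 4
              - 2638827906662400000 * RatFunc.X ^ 5
              + 879609302220800000 * RatFunc.X ^ 6) ∧
      ¬ ∃ g : RatFunc ℂ, g ^ 2 =
          -879609302220800000 * RatFunc.X ^ 3
            + 2638827906662400000 * RatFunc.X ^ 4
            - 2638827906662400000 * RatFunc.X ^ 5
            + 879609302220800000 * RatFunc.X ^ 6 := by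
  constructor
  · -- the discriminant computation
    set τ : L := algebraMap (RatFunc ℂ) L RatFunc.X with hτ
    have hA : algebraMap (RatFunc ℂ) L (256 * RatFunc.X) = 256 * τ := by
      rw [map_mul, hτ, map_ofNat]
    rw [hA] at hsplit
    have heval : ∀ x : L, ∏ i : Fin 6, (x - ρ i)
        = x ^ 6 + 4 * x ^ 5 + 20 * x ^ 4 - 256 * τ * x + 256 * τ := by
      intro x
      have h := congrArg (eval x) hsplit
      simpa [eval_prod] using h.symm
    have hroot : ∀ i : Fin 6,
        ρ i ^ 6 + 4 * ρ i ^ 5 + 20 * ρ i ^ 4 - 256 * τ * ρ i + 256 * τ = 0 := by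
      intro i
      rw [← heval (ρ i)]
      exact Finset.prod_eq_zero (Finset.mem_univ i) (sub_self _)
    have hder : ∀ i : Fin 6,
        6 * ρ i ^ 5 + 20 * ρ i ^ 4 + 80 * ρ i ^ 3 - 256 * τ
          = ∏ j ∈ Finset.univ.erase i, (ρ i - ρ j) := by
      intro i
      have hnodal : (∏ i : Fin 6, (X - C (ρ i)) : Polynomial L)
          = Lagrange.nodal Finset.univ ρ := (Lagrange.nodal_eq _ _).symm
      have h := congrArg (fun p => eval (ρ i) (derivative p)) hsplit
      simp only [hnodal] at h
      rw [Lagrange.eval_nodal_derivative_eval_node_eq (Finset.mem_univ i),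
        Lagrange.eval_nodal] at h
      rw [← h]
      simp [derivative_pow]
      ring
    -- combinatorial step
    have herase : ∀ i : Fin 6, Finset.univ.erase i = Finset.Iio i ∪ Finset.Ioi i := by
      intro i
      ext j
      simp [Finset.mem_erase, Finset.mem_Iio, Finset.mem_Ioi, ← ne_iff_lt_or_gt, ne_comm]
    have hdisj : ∀ i : Fin 6, Disjoint (Finset.Iio i) (Finset.Ioi i) := by
      intro i
      rw [Finset.disjoint_left]
      intro x hx hx'
      exact lt_asymm (Finset.mem_Iio.mp hx) (Finset.mem_Ioi.mp hx')
    have hswap : (∏ i : Fin 6, ∏ j ∈ Finset.Iio i, (ρ i - ρ j))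
        = ∏ i : Fin 6, ∏ j ∈ Finset.Ioi i, (ρ j - ρ i) := by
      rw [Finset.prod_comm' (t := fun i => Finset.Iio i) (s' := fun j => Finset.Ioi j)]
      intro x y
      simp [Finset.mem_Iio, Finset.mem_Ioi]
    have hneg : (∏ i : Fin 6, ∏ j ∈ Finset.Ioi i, (ρ i - ρ j))
        = (-1) ^ 15 * ∏ i : Fin 6, ∏ j ∈ Finset.Ioi i, (ρ j - ρ i) := by
      have h1 : ∀ i : Fin 6, ∏ j ∈ Finset.Ioi i, (ρ i - ρ j)
          = (-1 : L) ^ (Finset.Ioi i).card * ∏ j ∈ Finset.Ioi i, (ρ j - ρ i) := by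
        intro i
        rw [← Finset.prod_const, ← Finset.prod_mul_distrib]
        exact Finset.prod_congr rfl fun j _ => by ring
      rw [Finset.prod_congr rfl fun i _ => h1 i, Finset.prod_mul_distrib,
        Finset.prod_pow_eq_pow_sum]
      have h15 : (∑ i : Fin 6, (Finset.Ioi i).card) = 15 := by decide
      rw [h15]
    have hcomb : (∏ i : Fin 6, ∏ j ∈ Finset.univ.erase i, (ρ i - ρ j))
        = - (∏ i : Fin 6, ∏ j ∈ Finset.Ioi i, (ρ j - ρ i)) ^ 2 := by
      calc (∏ i : Fin 6, ∏ j ∈ Finset.univ.erase i, (ρ i - ρ j))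
          = ∏ i : Fin 6, ((∏ j ∈ Finset.Iio i, (ρ i - ρ j))
              * ∏ j ∈ Finset.Ioi i, (ρ i - ρ j)) := by
            refine Finset.prod_congr rfl fun i _ => ?_
            rw [herase i, Finset.prod_union (hdisj i)]
        _ = (∏ i : Fin 6, ∏ j ∈ Finset.Iio i, (ρ i - ρ j))
              * ∏ i : Fin 6, ∏ j ∈ Finset.Ioi i, (ρ i - ρ j) := Finset.prod_mul_distrib
        _ = - (∏ i : Fin 6, ∏ j ∈ Finset.Ioi i, (ρ j - ρ i)) ^ 2 := by
            rw [hswap, hneg]; ring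
    -- roots of the auxiliary cubic
    obtain ⟨a, b, c, he1, he2, he3⟩ := genus10_cubic_roots
    set ι : ℂ →+* L :=
      (algebraMap (RatFunc ℂ) L).comp (algebraMap ℂ (RatFunc ℂ)) with hι
    have ha' : ι a + ι b + ι c = -2 := by
      have := congrArg ι he1
      simpa [map_ofNat] using this
    have hb' : ι a * ι b + ι b * ι c + ι c * ι a = 8 := by
      have := congrArg ι he2
      simpa [map_ofNat] using this
    have hc' : ι a * ι b * ι c = 16 := by
      have := congrArg ι he3
      simpa [map_ofNat] using this
    have hcube : ∀ x : L, x^3 + 2*x^2 + 8*x - 16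
        = (x - ι a) * ((x - ι b) * (x - ι c)) := by
      intro x
      linear_combination x^2 * ha' - x * hb' + hc'
    -- basic products
    have hprod1 : ∏ i : Fin 6, (1 - ρ i) = 25 := by rw [heval 1]; ring
    have hprodm1 : ∏ i : Fin 6, (ρ i - 1) = 25 := by
      calc ∏ i : Fin 6, (ρ i - 1) = ∏ i : Fin 6, (-1 : L) * (1 - ρ i) :=
            Finset.prod_congr rfl fun i _ => by ring
        _ = (-1 : L) ^ 6 * ∏ i : Fin 6, (1 - ρ i) := by
            rw [Finset.prod_mul_distrib, Finset.prod_const, Finset.card_univ]; norm_num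
        _ = 25 := by rw [hprod1]; norm_num
    have hprod0 : ∏ i : Fin 6, ρ i = 256 * τ := by
      calc ∏ i : Fin 6, ρ i = ∏ i : Fin 6, (-1 : L) * ((0:L) - ρ i) :=
            Finset.prod_congr rfl fun i _ => by ring
        _ = (-1 : L) ^ 6 * ∏ i : Fin 6, ((0:L) - ρ i) := by
            rw [Finset.prod_mul_distrib, Finset.prod_const, Finset.card_univ]; norm_num
        _ = 256 * τ := by rw [heval 0]; ring
    -- product over a root of the cubic
    have hP : ∀ y : L, (y^3 + 2*y^2 + 8*y - 16 = 0) →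
        ∏ i : Fin 6, (ρ i - y) = 256 * (1 - τ) * (y - 1) := by
      intro y hy
      calc ∏ i : Fin 6, (ρ i - y) = ∏ i : Fin 6, (-1 : L) * (y - ρ i) :=
            Finset.prod_congr rfl fun i _ => by ring
        _ = (-1 : L) ^ 6 * ∏ i : Fin 6, (y - ρ i) := by
            rw [Finset.prod_mul_distrib, Finset.prod_const, Finset.card_univ]; norm_num
        _ = 256 * (1 - τ) * (y - 1) := by
            rw [heval y]
            linear_combination (y^3 + 2*y^2 + 8*y - 16) * hy
    have hga : ι a ^ 3 + 2 * ι a ^ 2 + 8 * ι a - 16 = 0 := by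
      rw [hcube (ι a)]; ring
    have hgb : ι b ^ 3 + 2 * ι b ^ 2 + 8 * ι b - 16 = 0 := by
      rw [hcube (ι b)]; ring
    have hgc : ι c ^ 3 + 2 * ι c ^ 2 + 8 * ι c - 16 = 0 := by
      rw [hcube (ι c)]; ring
    -- the key product identity
    have hBfac : ∀ i : Fin 6,
        (6 * ρ i ^ 5 + 20 * ρ i ^ 4 + 80 * ρ i ^ 3 - 256 * τ) * (ρ i - 1)
          = 5 * ρ i ^ 3 * ((ρ i - ι a) * ((ρ i - ι b) * (ρ i - ι c))) := by
      intro i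
      linear_combination hroot i + (5 * ρ i ^ 3) * hcube (ρ i)
    have hprodB : (∏ i : Fin 6,
          (6 * ρ i ^ 5 + 20 * ρ i ^ 4 + 80 * ρ i ^ 3 - 256 * τ)) * 25
        = (5 ^ 6 * (256 * τ) ^ 3)
            * ((256 * (1 - τ) * (ι a - 1)) * ((256 * (1 - τ) * (ι b - 1))
              * (256 * (1 - τ) * (ι c - 1)))) := by
      calc (∏ i : Fin 6, (6 * ρ i ^ 5 + 20 * ρ i ^ 4 + 80 * ρ i ^ 3 - 256 * τ)) * 25
          = (∏ i : Fin 6, (6 * ρ i ^ 5 + 20 * ρ i ^ 4 + 80 * ρ i ^ 3 - 256 * τ))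
              * ∏ i : Fin 6, (ρ i - 1) := by rw [hprodm1]
        _ = ∏ i : Fin 6, ((6 * ρ i ^ 5 + 20 * ρ i ^ 4 + 80 * ρ i ^ 3 - 256 * τ)
              * (ρ i - 1)) := Finset.prod_mul_distrib.symm
        _ = ∏ i : Fin 6, (5 * ρ i ^ 3 * ((ρ i - ι a) * ((ρ i - ι b) * (ρ i - ι c)))) :=
            Finset.prod_congr rfl fun i _ => hBfac i
        _ = (∏ i : Fin 6, 5 * ρ i ^ 3)
              * ((∏ i : Fin 6, (ρ i - ι a)) * ((∏ i : Fin 6, (ρ i - ι b))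
                * ∏ i : Fin 6, (ρ i - ι c))) := by
            simp only [Finset.prod_mul_distrib]
        _ = (5 ^ 6 * (256 * τ) ^ 3)
              * ((256 * (1 - τ) * (ι a - 1)) * ((256 * (1 - τ) * (ι b - 1))
                * (256 * (1 - τ) * (ι c - 1)))) := by
            rw [hP (ι a) hga, hP (ι b) hgb, hP (ι c) hgc]
            congr 1
            rw [Finset.prod_mul_distrib, Finset.prod_const, Finset.card_univ,
              Finset.prod_pow, hprod0]
            norm_num
    -- assemble
    haveI : CharZero (RatFunc ℂ) := charZero_of_injective_algebraMap
      (IsFractionRing.injective ℂ[X] (RatFunc ℂ))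
    haveI : CharZero L := charZero_of_injective_algebraMap
      (algebraMap (RatFunc ℂ) L).injective
    have h25 : (25 : L) ≠ 0 := by norm_num
    have habc1 : (ι a - 1) * ((ι b - 1) * (ι c - 1)) = 5 := by
      linear_combination hcube 1
    have hPp : (∏ i : Fin 6, (6 * ρ i ^ 5 + 20 * ρ i ^ 4 + 80 * ρ i ^ 3 - 256 * τ))
        = 879609302220800000 * (τ ^ 3 * (1 - τ) ^ 3) := by
      apply mul_left_cancel₀ h25
      rw [mul_comm (25 : L)]
      linear_combination hprodB + (5^6 * (256*τ)^3 * 256^3 * (1-τ)^3) * habc1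
    have hApoly : algebraMap (RatFunc ℂ) L
        (-879609302220800000 * RatFunc.X ^ 3
          + 2638827906662400000 * RatFunc.X ^ 4
          - 2638827906662400000 * RatFunc.X ^ 5
          + 879609302220800000 * RatFunc.X ^ 6)
        = -879609302220800000 * τ ^ 3 + 2638827906662400000 * τ ^ 4
            - 2638827906662400000 * τ ^ 5 + 879609302220800000 * τ ^ 6 := by
      simp only [map_add, map_sub, map_mul, map_pow, map_neg, map_ofNat, hτ]
    rw [hApoly]
    calc (∏ i : Fin 6, ∏ j ∈ Finset.Ioi i, (ρ j - ρ i)) ^ 2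
        = -∏ i : Fin 6, ∏ j ∈ Finset.univ.erase i, (ρ i - ρ j) := by
          rw [hcomb]; ring
      _ = -∏ i : Fin 6, (6 * ρ i ^ 5 + 20 * ρ i ^ 4 + 80 * ρ i ^ 3 - 256 * τ) := by
          rw [Finset.prod_congr rfl fun i _ => (hder i).symm]
      _ = -879609302220800000 * τ ^ 3 + 2638827906662400000 * τ ^ 4
            - 2638827906662400000 * τ ^ 5 + 879609302220800000 * τ ^ 6 := by
          rw [hPp]; ring
  · rintro ⟨g, hg⟩
    set F : ℂ[X] := -879609302220800000 * X ^ 3 + 2638827906662400000 * X ^ 4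
        - 2638827906662400000 * X ^ 5 + 879609302220800000 * X ^ 6 with hF
    have hmapF : algebraMap ℂ[X] (RatFunc ℂ) F =
        -879609302220800000 * RatFunc.X ^ 3 + 2638827906662400000 * RatFunc.X ^ 4
          - 2638827906662400000 * RatFunc.X ^ 5 + 879609302220800000 * RatFunc.X ^ 6 := by
      simp [hF, map_add, map_sub, map_mul, map_pow, map_neg, map_ofNat, RatFunc.algebraMap_X]
    have hd : g.denom ≠ 0 := RatFunc.denom_ne_zero g
    have hd' : (algebraMap ℂ[X] (RatFunc ℂ)) g.denom ≠ 0 := fun h =>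
      hd (IsFractionRing.injective ℂ[X] (RatFunc ℂ) (by rw [h, map_zero]))
    have hnd : algebraMap ℂ[X] (RatFunc ℂ) g.num = g * algebraMap ℂ[X] (RatFunc ℂ) g.denom := by
      have h := RatFunc.num_div_denom g
      rw [div_eq_iff hd'] at h
      exact h
    have hEq : algebraMap ℂ[X] (RatFunc ℂ) (g.num ^ 2) =
        algebraMap ℂ[X] (RatFunc ℂ) (F * g.denom ^ 2) := by
      rw [map_pow, hnd, map_mul, map_pow, mul_pow, hg, hmapF]
    have hpoly : g.num ^ 2 = F * g.denom ^ 2 := IsFractionRing.injective ℂ[X] (RatFunc ℂ) hEq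
    have hF0 : F ≠ 0 := by
      intro h
      have h2 : F.eval 2 = 0 := by rw [h]; simp
      rw [hF] at h2
      simp at h2
      norm_num at h2
    have hnum : g.num ≠ 0 := by
      intro h
      rw [h] at hpoly
      have := hpoly.symm
      simp [pow_eq_zero_iff, mul_eq_zero, hF0, hd] at this
    -- root multiplicities at 0
    set G : ℂ[X] := -879609302220800000 + 2638827906662400000 * X
        - 2638827906662400000 * X ^ 2 + 879609302220800000 * X ^ 3 with hG
    have hFG : F = X ^ 3 * G := by rw [hF, hG]; ring
    have hG0 : rootMultiplicity 0 G = 0 := by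
      apply rootMultiplicity_eq_zero
      rw [hG]
      norm_num [IsRoot]
    have hG0' : G ≠ 0 := by
      intro h
      rw [h] at hFG; simp at hFG; rw [hFG] at hF0; exact hF0 rfl
    have hX3 : rootMultiplicity (0:ℂ) (X ^ 3 : ℂ[X]) = 3 := by
      have := rootMultiplicity_X_sub_C_pow (0:ℂ) 3
      simpa using this
    have hrmF : rootMultiplicity 0 F = 3 := by
      rw [hFG, rootMultiplicity_mul (by
        intro h
        rcases mul_eq_zero.mp h with h' | h'
        · exact pow_ne_zero 3 X_ne_zero h'
        · exact hG0' h'), hX3, hG0]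
    have hL : rootMultiplicity 0 (g.num ^ 2) = 2 * rootMultiplicity 0 g.num := by
      rw [pow_two, rootMultiplicity_mul (by simpa using pow_ne_zero 2 hnum)]
      ring
    have hR : rootMultiplicity 0 (F * g.denom ^ 2)
        = 3 + 2 * rootMultiplicity 0 g.denom := by
      rw [rootMultiplicity_mul (mul_ne_zero hF0 (pow_ne_zero 2 hd)), hrmF, pow_two,
        rootMultiplicity_mul (mul_ne_zero hd hd)]
      ring
    have := hL ▸ hR ▸ congrArg (rootMultiplicity 0) hpoly
    omega
end
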